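/- arXiv:2109.09710 — 5 statements merged into one kernel-verified Lean document; each statement's English description precedes it below -/
import Mathlib

section
/- Let $\mathcal{B}$ be a Banach space of real-valued functions on a set $\mathcal{X}$ (with pointwise operations) such that for every $x \in \mathcal{X}$ the evaluation functional $f \mapsto f(x)$ is bounded. Then there exist a Banach space $\mathcal{F}$ and a map $\phi : \mathcal{X} \to \mathcal{F}'$ such that $\mathcal{B} = \{ f_\mu : \mu \in \mathcal{F} \}$ where $f_\mu(x) = \langle \phi(x), \mu \rangle$, and $\|f\|_{\mathcal{B}} = \inf\{ \|\mu\|_{\mathcal{F}} : \mu \in \mathcal{F}, f = f_\mu \}$. Conversely, given any Banach space $\mathcal{F}$ and map $\phi : \mathcal{X} \to \mathcal{F}'$, the space of functions $f_\mu$ with the quotient norm is a Banach space of functions on which point evaluations are bounded. -/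
/-!
For the first half take `F = B` itself, with `φ x` the point evaluation at `x`, a continuous
functional by hypothesis: since `f ↦ (x ↦ f x)` is injective, the only representative of `f` is
`f`, and the infimum is `‖f‖`.

For the converse, `μ ↦ (x ↦ ⟨φ x, μ⟩)` is a continuous linear map `T : F → (X → ℝ)`, so its kernel
is closed and `B = F ⧸ ker T` is a Banach space, embedded in the functions on `X` by the map `T`
induces. The quotient norm is by construction the infimum of `‖μ‖` over the representatives `μ`,
and point evaluations on `B` are continuous because they factor through the quotient.
-/

open Submodule

theorem Submodule.Quotient.isGLB_norm {R M : Type*} [Ring R] [SeminormedAddCommGroup M]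
    [Module R M] {S : Submodule R M} (x : M ⧸ S) :
    IsGLB (norm '' {m : M | Submodule.Quotient.mk m = x}) ‖x‖ := by
  refine ⟨?_, fun b hb => QuotientAddGroup.le_norm_iff.2 fun m hm => hb ⟨m, hm, rfl⟩⟩
  rintro _ ⟨m, rfl, rfl⟩
  exact norm_mk_le S m

theorem Submodule.Quotient.norm_eq_sInf {R M : Type*} [Ring R] [SeminormedAddCommGroup M]
    [Module R M] {S : Submodule R M} (x : M ⧸ S) :
    ‖x‖ = sInf (norm '' {m : M | Submodule.Quotient.mk m = x}) :=
  ((isGLB_norm x).csInf_eq (Set.Nonempty.image norm (mk_surjective S x))).symm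

section Coimage

variable {𝕜 F G : Type*} [NormedField 𝕜] [SeminormedAddCommGroup F] [NormedSpace 𝕜 F]
  [AddCommGroup G] [Module 𝕜 G]

theorem LinearMap.norm_quotient_ker_eq_sInf (T : F →ₗ[𝕜] G) (y : F ⧸ LinearMap.ker T) :
    ‖y‖ = sInf {c : ℝ | ∃ μ : F, T μ = (LinearMap.ker T).liftQ T le_rfl y ∧ ‖μ‖ = c} := by
  obtain ⟨ν, rfl⟩ := Submodule.Quotient.mk_surjective _ y
  rw [Quotient.norm_eq_sInf]
  congr 1
  ext c
  simp only [Set.mem_image, Set.mem_ofPred_eq, Submodule.Quotient.eq, LinearMap.sub_mem_ker_iff,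
    liftQ_apply]

theorem sInf_norm_fiber_of_injective {T : F →ₗ[𝕜] G} (hT : Function.Injective T) (f : F) :
    sInf {c : ℝ | ∃ μ : F, T μ = T f ∧ ‖μ‖ = c} = ‖f‖ := by
  have hfiber : {c : ℝ | ∃ μ : F, T μ = T f ∧ ‖μ‖ = c} = {‖f‖} := by
    ext c
    constructor
    · rintro ⟨μ, hμ, rfl⟩
      rw [hT hμ, Set.mem_singleton_iff]
    · rintro rfl
      exact ⟨f, rfl, rfl⟩
  rw [hfiber, csInf_singleton]

end Coimage

noncomputable def LinearMap.evalCLM {X B : Type*} [SeminormedAddCommGroup B] [NormedSpace ℝ B]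
    (ev : B →ₗ[ℝ] (X → ℝ)) (hbd : ∀ x : X, ∃ C : ℝ, ∀ f : B, |ev f x| ≤ C * ‖f‖)
    (x : X) : B →L[ℝ] ℝ :=
  ((LinearMap.proj x).comp ev).mkContinuousOfExistsBound (hbd x)

@[simp]
theorem LinearMap.evalCLM_apply {X B : Type*} [SeminormedAddCommGroup B] [NormedSpace ℝ B]
    (ev : B →ₗ[ℝ] (X → ℝ)) (hbd : ∀ x : X, ∃ C : ℝ, ∀ f : B, |ev f x| ≤ C * ‖f‖)
    (x : X) (f : B) : ev.evalCLM hbd x f = ev f x :=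
  rfl

/-- A Banach space of real-valued functions on a set `X` (with pointwise
operations, modelled by an injective linear map `ev : B →ₗ[ℝ] (X → ℝ)`) on which all point
evaluations are bounded admits a feature-map representation: there exist a Banach space `F` and
`φ : X → F'` such that `B = {f_μ : μ ∈ F}` with `f_μ x = ⟨φ x, μ⟩` and
`‖f‖_B = inf {‖μ‖ : f_μ = f}`.  Conversely, any Banach space `F` and map `φ : X → F'` give rise
to such a Banach space of functions with bounded point evaluations. -/
theorem stmt_0 :
    (∀ (X B : Type) [inst1 : NormedAddCommGroup B] [inst2 : NormedSpace ℝ B]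
        [inst3 : CompleteSpace B] (ev : B →ₗ[ℝ] (X → ℝ)),
      Function.Injective ev →
      (∀ x : X, ∃ C : ℝ, 0 < C ∧ ∀ f : B, |ev f x| ≤ C * ‖f‖) →
      ∃ (F : Type) (_ : NormedAddCommGroup F) (_ : NormedSpace ℝ F) (_ : CompleteSpace F)
        (φ : X → (F →L[ℝ] ℝ)),
        (∀ g : X → ℝ, (∃ f : B, ev f = g) ↔ (∃ μ : F, ∀ x, φ x μ = g x)) ∧
        (∀ f : B, ‖f‖ = sInf {c : ℝ | ∃ μ : F, (∀ x, φ x μ = ev f x) ∧ ‖μ‖ = c}))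
    ∧
    (∀ (X F : Type) [instF1 : NormedAddCommGroup F] [instF2 : NormedSpace ℝ F]
        [instF3 : CompleteSpace F] (φ : X → (F →L[ℝ] ℝ)),
      ∃ (B : Type) (_ : NormedAddCommGroup B) (_ : NormedSpace ℝ B) (_ : CompleteSpace B)
        (ev : B →ₗ[ℝ] (X → ℝ)),
        Function.Injective ev ∧
        (∀ g : X → ℝ, (∃ f : B, ev f = g) ↔ (∃ μ : F, ∀ x, φ x μ = g x)) ∧
        (∀ f : B, ‖f‖ = sInf {c : ℝ | ∃ μ : F, (∀ x, φ x μ = ev f x) ∧ ‖μ‖ = c}) ∧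
        (∀ x : X, ∃ C : ℝ, 0 < C ∧ ∀ f : B, |ev f x| ≤ C * ‖f‖)) := by
  refine ⟨fun X B _ _ _ ev hinj hbd => ?_, fun X F _ _ _ φ => ?_⟩
  · refine ⟨B, inferInstance, inferInstance, inferInstance,
      ev.evalCLM fun x => (hbd x).imp fun _ => And.right, fun g => ?_, fun f => ?_⟩
    · simp only [LinearMap.evalCLM_apply, ← funext_iff]
    · simpa only [LinearMap.evalCLM_apply, ← funext_iff] using
        (sInf_norm_fiber_of_injective hinj f).symm
  · set T := ContinuousLinearMap.pi φ
    have : IsClosed (T.ker : Set F) := T.isClosed_ker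
    refine ⟨F ⧸ T.ker, inferInstance, inferInstance, inferInstance, T.ker.liftQ T le_rfl,
      ?_, fun g => ?_, fun f => ?_, fun x => ?_⟩
    · rw [← LinearMap.ker_eq_bot, ker_liftQ_eq_bot _ _ _ le_rfl]
    · simp only [(Submodule.Quotient.mk_surjective _).exists, liftQ_apply, funext_iff,
        ContinuousLinearMap.coe_coe, T, ContinuousLinearMap.pi_apply]
    · simpa only [funext_iff, T, ContinuousLinearMap.coe_pi, LinearMap.pi_apply,
        ContinuousLinearMap.coe_coe] using
        LinearMap.norm_quotient_ker_eq_sInf (T : F →ₗ[ℝ] X → ℝ) f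
    · obtain ⟨C, hC, hbound⟩ := ((ContinuousLinearMap.proj x).comp (T.ker.liftQL T le_rfl)).bound
      exact ⟨C, hC, fun f => (Real.norm_eq_abs _).symm.trans_le (hbound f)⟩
end

section
/- A Schwartz function $\varphi \in \mathcal{S}(\mathbb{R})$ satisfies $\int_{\mathbb{R}} \varphi(x) x^k\,dx = 0$ for all $k \in \mathbb{N}$ (i.e., $\varphi$ lies in the Lizorkin space $\mathcal{S}_0(\mathbb{R})$) if and only if for every $k \in \mathbb{N}$, $\lim_{\omega \to 0} \mathcal{F}\varphi(\omega) / |\omega|^k = 0$. -/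
open MeasureTheory

/-- The Fourier transform `𝓕φ(ω) = (2π)^{-1/2} ∫ φ(x) e^{-i x ω} dx` of a real function. -/
noncomputable def FT (f : ℝ → ℝ) (ω : ℝ) : ℂ :=
  (Real.sqrt (2 * Real.pi) : ℂ)⁻¹ *
    ∫ x : ℝ, (f x : ℂ) * Complex.exp (-(Complex.I * (x : ℂ) * (ω : ℂ)))

/-! Expanding `e^{-ixω}` to order `n`, with the remainder bound
`‖e^{it} - ∑_{j<n} (it)^j/j!‖ ≤ |t|^n` valid for all real `t`, gives
`𝓕f(ω) = ∑_{j<n} c_j m_j ω^j + O(|ω|^n)`, where `m_j` are the moments of `f` and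
`c_j = (2π)^{-1/2} (-i)^j / j! ≠ 0`. For any `g` with such an expansion at `0`, all
coefficients vanish iff `g(ω)/|ω|^k → 0` for every `k`: one direction is the `O(|ω|^{k+1})` bound,
the other reads off the coefficients one at a time by strong induction. -/

open Filter Topology Asymptotics Complex Finset

lemma hasDerivAt_sum_range_I_mul_pow_div_factorial (n : ℕ) (s : ℝ) :
    HasDerivAt (fun s : ℝ => ∑ j ∈ range (n + 1), (I * s) ^ j / (j.factorial : ℂ))
      (I * ∑ j ∈ range n, (I * s) ^ j / (j.factorial : ℂ)) s := by
  induction n with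
  | zero => simpa using hasDerivAt_const s (1 : ℂ)
  | succ n ih =>
    have hI : HasDerivAt (fun s : ℝ => I * (s : ℂ)) I s := by
      simpa using (hasDerivAt_id s).ofReal_comp.const_mul I
    have hterm : HasDerivAt (fun s : ℝ => (I * s) ^ (n + 1) / ((n + 1).factorial : ℂ))
        (I * ((I * s) ^ n / (n.factorial : ℂ))) s := by
      refine ((hI.fun_pow (n + 1)).div_const ((n + 1).factorial : ℂ)).congr_deriv ?_
      rw [Nat.factorial_succ, Nat.add_sub_cancel]
      push_cast
      field_simp
    have := ih.fun_add hterm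
    simp only [← sum_range_succ, ← mul_add] at this
    exact this

theorem norm_exp_I_mul_sub_sum_le (n : ℕ) (t : ℝ) :
    ‖exp (I * t) - ∑ j ∈ range n, (I * t) ^ j / (j.factorial : ℂ)‖ ≤ |t| ^ n := by
  induction n generalizing t with
  | zero => simp [norm_exp_I_mul_ofReal]
  | succ n ih =>
    set F : ℝ → ℂ := fun s => exp (I * s) - ∑ j ∈ range (n + 1), (I * s) ^ j / (j.factorial : ℂ)
    have hF : ∀ s : ℝ, HasDerivAt F
        (I * (exp (I * s) - ∑ j ∈ range n, (I * s) ^ j / (j.factorial : ℂ))) s := by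
      intro s
      have hexp : HasDerivAt (fun s : ℝ => exp (I * s)) (I * exp (I * s)) s := by
        simpa [mul_comm] using ((hasDerivAt_id s).ofReal_comp.const_mul I).cexp
      exact (hexp.fun_sub (hasDerivAt_sum_range_I_mul_pow_div_factorial n s)).congr_deriv
        (mul_sub _ _ _).symm
    have hF0 : F 0 = 0 := by simp [F, sum_range_succ']
    have hbound : ∀ s ∈ Metric.closedBall (0 : ℝ) |t|,
        ‖I * (exp (I * s) - ∑ j ∈ range n, (I * s) ^ j / (j.factorial : ℂ))‖ ≤ |t| ^ n := by
      intro s hs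
      rw [norm_mul, norm_I, one_mul]
      exact (ih s).trans (pow_le_pow_left₀ (abs_nonneg s) (mem_closedBall_zero_iff.1 hs) n)
    have := (convex_closedBall (0 : ℝ) |t|).norm_image_sub_le_of_norm_hasDerivWithin_le
      (fun s _ => (hF s).hasDerivWithinAt) hbound (Metric.mem_closedBall_self (abs_nonneg t))
      (mem_closedBall_zero_iff.2 le_rfl)
    simpa [hF0, pow_succ] using this

lemma tendsto_div_abs_pow_of_isBigO {g : ℝ → ℂ} {k : ℕ}
    (hg : g =O[𝓝 0] fun ω : ℝ => ω ^ (k + 1)) :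
    Tendsto (fun ω => g ω / ((|ω| ^ k : ℝ) : ℂ)) (𝓝[≠] 0) (𝓝 0) := by
  obtain ⟨C, hC⟩ := hg.bound
  have hlim : Tendsto (fun ω : ℝ => C * |ω|) (𝓝[≠] 0) (𝓝 0) := by
    simpa using ((continuous_abs.tendsto (0 : ℝ)).const_mul C).mono_left nhdsWithin_le_nhds
  refine squeeze_zero_norm' ?_ hlim
  filter_upwards [nhdsWithin_le_nhds hC, self_mem_nhdsWithin] with ω hω (hω0 : ω ≠ 0)
  have hpos : 0 < |ω| ^ k := pow_pos (abs_pos.2 hω0) k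
  rw [norm_div, norm_real, Real.norm_of_nonneg hpos.le, div_le_iff₀ hpos]
  calc ‖g ω‖ ≤ C * ‖ω ^ (k + 1)‖ := hω
    _ = C * |ω| * |ω| ^ k := by rw [norm_pow, Real.norm_eq_abs, pow_succ]; ring

theorem forall_eq_zero_iff_tendsto_div_abs_pow {g : ℝ → ℂ} {a : ℕ → ℂ}
    (hg : ∀ n, (fun ω : ℝ => g ω - ∑ j ∈ range n, a j * (ω : ℂ) ^ j) =O[𝓝 0]
      fun ω : ℝ => ω ^ n) :
    (∀ k, a k = 0) ↔ ∀ k, Tendsto (fun ω => g ω / ((|ω| ^ k : ℝ) : ℂ)) (𝓝[≠] 0) (𝓝 0) := by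
  refine ⟨fun ha k => tendsto_div_abs_pow_of_isBigO (by simpa [ha] using hg (k + 1)),
    fun h k => ?_⟩
  induction k using Nat.strong_induction_on with
  | _ k ih =>
  have hrem : Tendsto (fun ω => (g ω - a k * (ω : ℂ) ^ k) / ((|ω| ^ k : ℝ) : ℂ))
      (𝓝[≠] 0) (𝓝 0) := by
    have hlower (ω : ℝ) : ∑ j ∈ range k, a j * (ω : ℂ) ^ j = 0 :=
      sum_eq_zero fun j hj => by rw [ih j (mem_range.1 hj), zero_mul]
    exact tendsto_div_abs_pow_of_isBigO (by simpa [sum_range_succ, hlower] using hg (k + 1))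
  have hlead : Tendsto (fun _ : ℝ => ‖a k‖) (𝓝[≠] 0) (𝓝 0) := by
    have hdiff := ((h k).sub hrem).norm
    rw [sub_zero, norm_zero] at hdiff
    refine hdiff.congr' ?_
    filter_upwards [self_mem_nhdsWithin] with ω (hω0 : ω ≠ 0)
    have hpos : 0 < |ω| ^ k := pow_pos (abs_pos.2 hω0) k
    rw [← sub_div, sub_sub_cancel, norm_div, norm_mul, norm_pow, norm_real, norm_real,
      Real.norm_of_nonneg hpos.le, Real.norm_eq_abs, mul_div_assoc, div_self hpos.ne', mul_one]
  exact norm_eq_zero.1 (tendsto_nhds_unique tendsto_const_nhds hlead)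

noncomputable def taylorCoeffFT (f : ℝ → ℝ) (j : ℕ) : ℂ :=
  (Real.sqrt (2 * Real.pi) : ℂ)⁻¹ * ((-I) ^ j / (j.factorial : ℂ)) * ((∫ x, f x * x ^ j : ℝ) : ℂ)

lemma taylorCoeffFT_eq_zero_iff (f : ℝ → ℝ) (j : ℕ) :
    taylorCoeffFT f j = 0 ↔ ∫ x, f x * x ^ j = 0 := by
  simp [taylorCoeffFT, Real.sqrt_eq_zero', Real.pi_pos.not_ge, I_ne_zero, Nat.factorial_ne_zero]

lemma ofReal_integral_mul_pow (f : ℝ → ℝ) (j : ℕ) :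
    ((∫ x, f x * x ^ j : ℝ) : ℂ) = ∫ x, (f x : ℂ) * (x : ℂ) ^ j := by
  rw [← integral_complex_ofReal]
  push_cast
  rfl

section Moments

variable {f : ℝ → ℝ} (hf : ∀ k : ℕ, Integrable (fun x => f x * x ^ k))
include hf

lemma integrable_ofReal_mul_pow (j : ℕ) : Integrable (fun x : ℝ => (f x : ℂ) * (x : ℂ) ^ j) := by
  simpa using (hf j).ofReal (𝕜 := ℂ)

lemma integrable_ofReal_mul_exp (ω : ℝ) :
    Integrable (fun x : ℝ => (f x : ℂ) * exp (-(I * x * ω))) := by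
  refine Integrable.mul_bdd (c := 1) (by simpa using (hf 0).ofReal (𝕜 := ℂ)) (by fun_prop) ?_
  filter_upwards with x
  simp [norm_exp]

lemma norm_integral_mul_exp_sub_sum_le (n : ℕ) (ω : ℝ) :
    ‖(∫ x, (f x : ℂ) * exp (-(I * x * ω))) -
        ∑ j ∈ range n, (-I * ω) ^ j / (j.factorial : ℂ) * ∫ x, (f x : ℂ) * (x : ℂ) ^ j‖
      ≤ |ω| ^ n * ∫ x, ‖f x * x ^ n‖ := by
  have hterm (j : ℕ) :
      Integrable (fun x : ℝ => (-I * ω) ^ j / (j.factorial : ℂ) * ((f x : ℂ) * x ^ j)) :=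
    (integrable_ofReal_mul_pow hf j).const_mul _
  have hsum : ∑ j ∈ range n, (-I * ω) ^ j / (j.factorial : ℂ) * ∫ x, (f x : ℂ) * (x : ℂ) ^ j =
      ∫ x, ∑ j ∈ range n, (-I * ω) ^ j / (j.factorial : ℂ) * ((f x : ℂ) * x ^ j) := by
    rw [integral_finsetSum _ fun j _ => hterm j]
    simp only [integral_const_mul]
  rw [hsum, ← integral_sub (integrable_ofReal_mul_exp hf ω)
    (integrable_finsetSum _ fun j _ => hterm j), ← integral_const_mul]
  refine norm_integral_le_of_norm_le ((hf n).norm.const_mul _) (Eventually.of_forall fun x => ?_)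
  set t : ℝ := -(x * ω)
  have hfactor : (f x : ℂ) * exp (-(I * x * ω)) -
        ∑ j ∈ range n, (-I * ω) ^ j / (j.factorial : ℂ) * ((f x : ℂ) * x ^ j) =
      f x * (exp (I * t) - ∑ j ∈ range n, (I * t) ^ j / (j.factorial : ℂ)) := by
    rw [mul_sub, mul_sum]
    push_cast [t]
    congr 1
    · congr 2; ring
    · exact sum_congr rfl fun j _ => by ring
  calc _ = ‖f x‖ * ‖exp (I * t) - ∑ j ∈ range n, (I * t) ^ j / (j.factorial : ℂ)‖ := by
        rw [hfactor, norm_mul, norm_real]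
    _ ≤ ‖f x‖ * |t| ^ n := by gcongr; exact norm_exp_I_mul_sub_sum_le n t
    _ = |ω| ^ n * ‖f x * x ^ n‖ := by
        rw [abs_neg, abs_mul, mul_pow, norm_mul, norm_pow, Real.norm_eq_abs, Real.norm_eq_abs]
        ring

lemma FT_sub_sum_taylorCoeffFT_isBigO (n : ℕ) :
    (fun ω : ℝ => FT f ω - ∑ j ∈ range n, taylorCoeffFT f j * (ω : ℂ) ^ j) =O[𝓝 0]
      fun ω : ℝ => ω ^ n := by
  refine IsBigO.of_bound ((Real.sqrt (2 * Real.pi))⁻¹ * ∫ x, ‖f x * x ^ n‖)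
    (Eventually.of_forall fun ω => ?_)
  have hexpand : FT f ω - ∑ j ∈ range n, taylorCoeffFT f j * (ω : ℂ) ^ j =
      (Real.sqrt (2 * Real.pi) : ℂ)⁻¹ * ((∫ x, (f x : ℂ) * exp (-(I * x * ω))) -
        ∑ j ∈ range n, (-I * ω) ^ j / (j.factorial : ℂ) * ∫ x, (f x : ℂ) * (x : ℂ) ^ j) := by
    simp only [FT, taylorCoeffFT, ofReal_integral_mul_pow, mul_sub, mul_sum]
    congr 1
    exact sum_congr rfl fun j _ => by ring
  rw [hexpand, norm_mul, norm_inv, norm_real, Real.norm_of_nonneg (Real.sqrt_nonneg _),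
    norm_pow, Real.norm_eq_abs, mul_assoc, mul_comm _ (|ω| ^ n)]
  gcongr
  exact norm_integral_mul_exp_sub_sum_le hf n ω

theorem moments_eq_zero_iff_tendsto_FT_div_abs_pow :
    (∀ k : ℕ, ∫ x, f x * x ^ k = 0) ↔
      ∀ k : ℕ, Tendsto (fun ω => FT f ω / ((|ω| ^ k : ℝ) : ℂ)) (𝓝[≠] 0) (𝓝 0) := by
  rw [← forall_eq_zero_iff_tendsto_div_abs_pow (FT_sub_sum_taylorCoeffFT_isBigO hf)]
  exact forall_congr' fun k => (taylorCoeffFT_eq_zero_iff f k).symm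

end Moments

lemma SchwartzMap.integrable_mul_pow (φ : SchwartzMap ℝ ℝ) (k : ℕ) :
    Integrable (fun x => φ x * x ^ k) :=
  (φ.integrable_pow_mul volume k).mono' (by fun_prop)
    (Eventually.of_forall fun x => by rw [norm_mul, norm_pow, mul_comm])

/-- a Schwartz function `φ ∈ S(ℝ)` has all moments vanishing (i.e. lies in the
Lizorkin space `S₀(ℝ)`) if and only if `𝓕φ(ω)/|ω|^k → 0` as `ω → 0`, for every `k ∈ ℕ`. -/
theorem stmt_7 (φ : SchwartzMap ℝ ℝ) :
    (∀ k : ℕ, ∫ x : ℝ, φ x * x ^ k = 0) ↔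
    (∀ k : ℕ, Filter.Tendsto (fun ω : ℝ => FT (fun x => φ x) ω / ((|ω| ^ k : ℝ) : ℂ))
      (nhdsWithin 0 {(0 : ℝ)}ᶜ) (nhds 0)) :=
  moments_eq_zero_iff_tendsto_FT_div_abs_pow φ.integrable_mul_pow
end

section
/- The antiderivative operator $\mathcal{A}\varphi(t) = \int_{-\infty}^t \varphi(s)\,ds$ maps the Lizorkin space $\mathcal{S}_0(\mathbb{R})$ continuously into itself, and satisfies $\mathcal{A}(\varphi') = (\mathcal{A}\varphi)' = \varphi$ for all $\varphi \in \mathcal{S}_0(\mathbb{R})$. In particular, for every $m \in \mathbb{N}$ there is a constant $C$ with $\sup_x \langle x\rangle^m |\mathcal{A}\varphi(x)| \le C \sup_x \langle x\rangle^{2m+4} |\varphi(x)|$. -/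
/-! Since `∫ φ = 0`, the primitive `∫_{-∞}^x φ` equals `-∫_x^∞ φ`, so it is the integral of `φ`
over whichever half-line lies beyond `|x|`. There `⟨s⟩^{2k+2} |φ s| ≤ M` gives
`|φ s| ≤ M ⟨x⟩^{-2k} (1 + s²)⁻¹`, and integrating yields `⟨x⟩^{2k} |∫_{-∞}^x φ| ≤ π M`.
The higher derivatives of the primitive are those of `φ`, and integration by parts turns its
moments into moments of `φ`. -/

open MeasureTheory Real Set Filter

theorem abs_setIntegral_le_pi_mul {f : ℝ → ℝ} {A : Set ℝ} {c : ℝ} (hA : MeasurableSet A)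
    (hc : 0 ≤ c) (hf : ∀ s ∈ A, |f s| ≤ c * (1 + s ^ 2)⁻¹) :
    |∫ s in A, f s| ≤ π * c := by
  have hg : Integrable (fun s : ℝ => c * (1 + s ^ 2)⁻¹) := integrable_inv_one_add_sq.const_mul c
  calc |∫ s in A, f s| ≤ ∫ s in A, c * (1 + s ^ 2)⁻¹ := by
        simpa only [Real.norm_eq_abs] using
          norm_integral_le_of_norm_le (f := f) hg.integrableOn
            ((ae_restrict_iff' hA).2 (.of_forall hf))
    _ ≤ ∫ s, c * (1 + s ^ 2)⁻¹ := setIntegral_le_integral hg (.of_forall fun s => by positivity)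
    _ = π * c := by rw [integral_const_mul, integral_univ_inv_one_add_sq, mul_comm]

theorem integral_Iic_eq_neg_integral_Ioi {f : ℝ → ℝ} (hf : Integrable f) (h0 : ∫ s, f s = 0)
    (x : ℝ) : ∫ s in Iic x, f s = -∫ s in Ioi x, f s := by
  have := intervalIntegral.integral_Iic_add_Ioi (b := x) hf.integrableOn hf.integrableOn
  linarith

theorem one_add_sq_pow_mul_abs_integral_Iic_le {f : ℝ → ℝ} (hf : Integrable f)
    (h0 : ∫ s, f s = 0) {k : ℕ} {M : ℝ} (hM : ∀ s, (1 + s ^ 2) ^ (k + 1) * |f s| ≤ M) (x : ℝ) :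
    (1 + x ^ 2) ^ k * |∫ s in Iic x, f s| ≤ π * M := by
  have hx : 0 < (1 + x ^ 2) ^ k := by positivity
  have hM0 : 0 ≤ M := (by positivity : 0 ≤ (1 + (0 : ℝ) ^ 2) ^ (k + 1) * |f 0|).trans (hM 0)
  have htail : ∀ A : Set ℝ, MeasurableSet A → (∀ s ∈ A, x ^ 2 ≤ s ^ 2) →
      |∫ s in A, f s| ≤ π * (M / (1 + x ^ 2) ^ k) := by
    refine fun A hA hAx => abs_setIntegral_le_pi_mul hA (by positivity) fun s hs => ?_
    have hxs : (1 + x ^ 2) ^ k ≤ (1 + s ^ 2) ^ k :=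
      pow_le_pow_left₀ (by positivity) (by linarith [hAx s hs]) k
    rw [div_mul_eq_mul_div, le_div_iff₀ hx, ← div_eq_mul_inv, le_div_iff₀ (by positivity)]
    calc |f s| * (1 + x ^ 2) ^ k * (1 + s ^ 2) ≤ |f s| * (1 + s ^ 2) ^ k * (1 + s ^ 2) := by
          gcongr
      _ = (1 + s ^ 2) ^ (k + 1) * |f s| := by ring
      _ ≤ M := hM s
  have hhalf : |∫ s in Iic x, f s| ≤ π * (M / (1 + x ^ 2) ^ k) := by
    rcases le_total x 0 with hx0 | hx0
    · exact htail _ measurableSet_Iic fun s (hs : s ≤ x) => by nlinarith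
    · rw [integral_Iic_eq_neg_integral_Ioi hf h0, abs_neg]
      exact htail _ measurableSet_Ioi fun s (hs : x < s) => by nlinarith
  calc (1 + x ^ 2) ^ k * |∫ s in Iic x, f s|
      ≤ (1 + x ^ 2) ^ k * (π * (M / (1 + x ^ 2) ^ k)) := by gcongr
    _ = π * M := by field_simp

theorem hasDerivAt_integral_Iic {f : ℝ → ℝ} (hf : Integrable f) (hc : Continuous f) (t : ℝ) :
    HasDerivAt (fun u => ∫ s in Iic u, f s) (f t) t := by
  have hsplit :
      (fun u => ∫ s in Iic u, f s) = fun u => (∫ s in Iic 0, f s) + ∫ s in 0..u, f s := by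
    ext u
    rw [← intervalIntegral.integral_Iic_sub_Iic hf.integrableOn hf.integrableOn]
    ring
  rw [hsplit]
  exact (intervalIntegral.integral_hasDerivAt_right hf.intervalIntegrable
    hc.stronglyMeasurable.stronglyMeasurableAtFilter hc.continuousAt).const_add _

open scoped SchwartzMap

namespace SchwartzMap

theorem exists_one_add_sq_pow_mul_abs_le (φ : 𝓢(ℝ, ℝ)) (j : ℕ) :
    ∃ M, ∀ s, (1 + s ^ 2) ^ j * |φ s| ≤ M := by
  refine ⟨2 ^ (2 * j) * (Finset.Iic (2 * j, 0)).sup (fun m => SchwartzMap.seminorm ℝ m.1 m.2) φ,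
    fun s => ?_⟩
  have h := one_add_le_sup_seminorm_apply (𝕜 := ℝ) (m := (2 * j, 0)) le_rfl le_rfl φ s
  rw [norm_iteratedFDeriv_zero, Real.norm_eq_abs, Real.norm_eq_abs] at h
  refine le_trans ?_ h
  rw [pow_mul]
  gcongr
  nlinarith [abs_nonneg s, sq_abs s]

theorem integrable_mul_pow_s9 (f : 𝓢(ℝ, ℝ)) (n : ℕ) : Integrable fun x => f x * x ^ n := by
  refine (f.integrable_pow_mul volume n).mono' (by fun_prop) (.of_forall fun x => ?_)
  rw [norm_mul, norm_pow, mul_comm]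

theorem deriv_integral_Iic (φ : 𝓢(ℝ, ℝ)) : deriv (fun u => ∫ s in Iic u, φ s) = φ :=
  funext fun t => (hasDerivAt_integral_Iic φ.integrable φ.continuous t).deriv

noncomputable def antideriv (φ : 𝓢(ℝ, ℝ)) (h0 : ∫ x, φ x = 0) : 𝓢(ℝ, ℝ) where
  toFun t := ∫ s in Iic t, φ s
  smooth' := by
    rw [contDiff_infty_iff_deriv, deriv_integral_Iic]
    exact ⟨fun t => (hasDerivAt_integral_Iic φ.integrable φ.continuous t).differentiableAt,
      φ.smooth'⟩
  decay' k
    | 0 => by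
      obtain ⟨M, hM⟩ := φ.exists_one_add_sq_pow_mul_abs_le (k + 1)
      refine ⟨π * M, fun x => ?_⟩
      rw [norm_iteratedFDeriv_zero, Real.norm_eq_abs, Real.norm_eq_abs]
      refine le_trans ?_ (one_add_sq_pow_mul_abs_integral_Iic_le φ.integrable h0 hM x)
      gcongr
      nlinarith [abs_nonneg x, sq_abs x]
    | n + 1 => by
      obtain ⟨C, -, hC⟩ := φ.decay k n
      refine ⟨C, fun x => ?_⟩
      rw [norm_iteratedFDeriv_eq_norm_iteratedDeriv, iteratedDeriv_succ', deriv_integral_Iic,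
        ← norm_iteratedFDeriv_eq_norm_iteratedDeriv]
      exact hC x

theorem hasDerivAt_antideriv (φ : 𝓢(ℝ, ℝ)) (h0 : ∫ x, φ x = 0) (t : ℝ) :
    HasDerivAt (antideriv φ h0) (φ t) t :=
  hasDerivAt_integral_Iic φ.integrable φ.continuous t

theorem add_one_mul_integral_mul_pow_of_hasDerivAt {ψ φ : 𝓢(ℝ, ℝ)}
    (h : ∀ x, HasDerivAt ψ (φ x) x) (n : ℕ) :
    (n + 1) * ∫ x, ψ x * x ^ n = -∫ x, φ x * x ^ (n + 1) := by
  have hpow : ∀ x : ℝ, HasDerivAt (· ^ (n + 1)) (((n + 1 : ℕ) : ℝ) * x ^ n) x :=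
    fun x => hasDerivAt_pow (n + 1) x
  have hparts := integral_mul_deriv_eq_deriv_mul_of_integrable (fun x _ => h x)
    (fun x _ => hpow x) (((ψ.integrable_mul_pow_s9 n).const_mul (n + 1 : ℝ)).congr
      (.of_forall fun x => by simp only [Pi.mul_apply]; push_cast; ring))
    (φ.integrable_mul_pow_s9 (n + 1)) (ψ.integrable_mul_pow_s9 (n + 1))
  rw [← hparts, ← integral_const_mul]
  congr 1 with x
  push_cast
  ring

theorem integral_Iic_deriv (φ : 𝓢(ℝ, ℝ)) (t : ℝ) : ∫ s in Iic t, deriv φ s = φ t := by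
  have hφ' : Integrable (deriv φ) :=
    (derivCLM ℝ ℝ φ).integrable.congr (.of_forall (derivCLM_apply ℝ φ))
  rw [integral_Iic_of_hasDerivAt_of_tendsto' (fun x _ => φ.differentiableAt.hasDerivAt)
    hφ'.integrableOn ((zero_at_infty φ).mono_left atBot_le_cocompact), sub_zero]

theorem one_add_sq_pow_mul_abs_integral_Iic_le_iSup (φ : 𝓢(ℝ, ℝ)) (h0 : ∫ x, φ x = 0)
    {k j : ℕ} (hkj : k + 1 ≤ j) (x : ℝ) :
    (1 + x ^ 2) ^ k * |∫ s in Iic x, φ s| ≤ π * ⨆ s, (1 + s ^ 2) ^ j * |φ s| := by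
  obtain ⟨M, hM⟩ := φ.exists_one_add_sq_pow_mul_abs_le j
  refine one_add_sq_pow_mul_abs_integral_Iic_le φ.integrable h0 (fun s => ?_) x
  refine le_trans ?_ (le_ciSup ⟨M, forall_mem_range.2 hM⟩ s)
  gcongr
  nlinarith [sq_nonneg s]

end SchwartzMap

/-- the antiderivative operator `Aφ(t) = ∫_{-∞}^t φ(s) ds` maps the Lizorkin
space `S₀(ℝ)` (Schwartz functions with all moments vanishing) into itself, satisfies
`A(φ') = (Aφ)' = φ`, and obeys the continuity estimate
`sup_x ⟨x⟩^m |Aφ(x)| ≤ C sup_x ⟨x⟩^{2m+4} |φ(x)|` with `C` depending only on `m`. -/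
theorem stmt_9 :
    (∀ φ : SchwartzMap ℝ ℝ, (∀ n : ℕ, ∫ x : ℝ, φ x * x ^ n = 0) →
      ∃ ψ : SchwartzMap ℝ ℝ,
        (∀ t : ℝ, ψ t = ∫ s in Set.Iic t, φ s) ∧
        (∀ n : ℕ, ∫ x : ℝ, ψ x * x ^ n = 0) ∧
        (∀ t : ℝ, deriv (fun u => ψ u) t = φ t) ∧
        (∀ t : ℝ, (∫ s in Set.Iic t, deriv (fun u => φ u) s) = φ t)) ∧
    (∀ m : ℕ, ∃ C : ℝ, 0 < C ∧
      ∀ φ : SchwartzMap ℝ ℝ, (∀ n : ℕ, ∫ x : ℝ, φ x * x ^ n = 0) →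
        (⨆ x : ℝ, ((1 + x ^ 2) ^ ((m : ℝ) / 2)) * |∫ s in Set.Iic x, φ s|)
          ≤ C * ⨆ x : ℝ, ((1 + x ^ 2) ^ (((2 * m + 4 : ℕ) : ℝ) / 2)) * |φ x|) := by
  refine ⟨fun φ hmom => ?_, fun m => ⟨π, pi_pos, fun φ hmom => ciSup_le fun x => ?_⟩⟩
  · have h0 : ∫ x, φ x = 0 := by simpa using hmom 0
    refine ⟨SchwartzMap.antideriv φ h0, fun t => rfl, fun n => ?_,
      fun t => (SchwartzMap.hasDerivAt_antideriv φ h0 t).deriv, φ.integral_Iic_deriv⟩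
    have := SchwartzMap.add_one_mul_integral_mul_pow_of_hasDerivAt
      (SchwartzMap.hasDerivAt_antideriv φ h0) n
    rw [hmom (n + 1), neg_zero] at this
    exact (mul_eq_zero.1 this).resolve_left n.cast_add_one_ne_zero
  · have hexp : ∀ s : ℝ, (1 + s ^ 2) ^ (((2 * m + 4 : ℕ) : ℝ) / 2) = (1 + s ^ 2) ^ (m + 2) :=
      fun s => by rw [← rpow_natCast _ (m + 2)]; push_cast; ring_nf
    simp only [hexp]
    calc (1 + x ^ 2) ^ ((m : ℝ) / 2) * |∫ s in Iic x, φ s|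
        ≤ (1 + x ^ 2) ^ m * |∫ s in Iic x, φ s| := by
          rw [← rpow_natCast _ m]
          gcongr
          · nlinarith [sq_nonneg x]
          · linarith [(m.cast_nonneg : (0 : ℝ) ≤ m)]
      _ ≤ _ := φ.one_add_sq_pow_mul_abs_integral_Iic_le_iSup (by simpa using hmom 0) (by omega) x
end

section
/- If two bounded real measures $\mu, \mu'$ on $\Xi = S^{d-1}\times\mathbb{R}$ satisfy $\mu = \mu' + p$ as tempered distributions, where $p$ is a polynomial in the variable $t$ (i.e., they define the same Lizorkin distribution), then $\mu = \mu'$ as measures. -/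
/-!
Pair both sides with `ψ(n, t) = φ(t)`, where `φ` is a bump of height one and width `2R` placed
where `p` has constant sign and `|p| ≥ c > 0`. The measures contribute at most their total
variations, the polynomial term at least `2Rc · σ(S^{d-1})`; letting `R → ∞` forces `p = 0` or
`σ = 0`. Then `μ` and `μ'` agree on `C_c(Ξ)`, and since finite measures on the locally compact,
second countable space `Ξ` are regular, Riesz–Markov uniqueness applied to the Jordan parts
gives `μ = μ'`.
-/

open MeasureTheory

/-- Euclidean space `ℝ^d`. -/
abbrev E (d : ℕ) := EuclideanSpace ℝ (Fin d)

/-- The unit sphere `S^{d-1} ⊆ ℝ^d`. -/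
abbrev Sph (d : ℕ) := Metric.sphere (0 : E d) 1

/-- The parameter space `Ξ = S^{d-1} × ℝ`. -/
abbrev Xi (d : ℕ) := Sph d × ℝ

/-- Integral of a real function against a bounded signed measure. -/
noncomputable def sInt {Θ : Type*} [MeasurableSpace Θ] (μ : SignedMeasure Θ) (f : Θ → ℝ) : ℝ :=
  (∫ θ, f θ ∂μ.toJordanDecomposition.posPart) - ∫ θ, f θ ∂μ.toJordanDecomposition.negPart

open Filter Metric Set

section SignedMeasure

variable {X : Type*} [MeasurableSpace X]

lemma abs_sInt_le (μ : SignedMeasure X) {ψ : X → ℝ} {C : ℝ} (hψ : ∀ x, |ψ x| ≤ C) :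
    |sInt μ ψ| ≤ C * μ.totalVariation.real univ := by
  have hbound (ν : Measure X) [IsFiniteMeasure ν] : |∫ x, ψ x ∂ν| ≤ C * ν.real univ :=
    norm_integral_le_of_norm_le_const <|
      Eventually.of_forall fun x => (Real.norm_eq_abs _).trans_le (hψ x)
  rw [SignedMeasure.totalVariation, measureReal_add_apply, mul_add]
  exact (abs_sub _ _).trans (add_le_add (hbound _) (hbound _))

variable [TopologicalSpace X] [T2Space X] [LocallyCompactSpace X] [SecondCountableTopology X]
  [BorelSpace X]

lemma eq_of_forall_sInt_eq {μ ν : SignedMeasure X}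
    (h : ∀ ψ : X → ℝ, Continuous ψ → HasCompactSupport ψ → sInt μ ψ = sInt ν ψ) : μ = ν := by
  set P := μ.toJordanDecomposition.posPart
  set N := μ.toJordanDecomposition.negPart
  set P' := ν.toJordanDecomposition.posPart
  set N' := ν.toJordanDecomposition.negPart
  have hsum : P + N' = P' + N := by
    refine Measure.ext_of_integral_eq_on_compactlySupported fun f => ?_
    have hint (ρ : Measure X) [IsFiniteMeasure ρ] : Integrable f ρ :=
      f.continuous.integrable_of_hasCompactSupport f.hasCompactSupport
    have := h f f.continuous f.hasCompactSupport
    rw [sInt, sInt] at this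
    rw [integral_add_measure (hint _) (hint _), integral_add_measure (hint _) (hint _)]
    linarith
  rw [← μ.toSignedMeasure_toJordanDecomposition, ← ν.toSignedMeasure_toJordanDecomposition,
    JordanDecomposition.toSignedMeasure, JordanDecomposition.toSignedMeasure,
    sub_eq_sub_iff_add_eq_add, ← Measure.toSignedMeasure_add, ← Measure.toSignedMeasure_add]
  congr 1

end SignedMeasure

lemma Polynomial.exists_sign_mul_ge {p : Polynomial ℝ} (hp : p ≠ 0) :
    ∃ ε c T : ℝ, |ε| = 1 ∧ 0 < c ∧ ∀ t ≥ T, c ≤ ε * p.eval t := by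
  rcases le_or_gt p.degree 0 with hdeg | hdeg
  · rw [eq_C_of_degree_le_zero hdeg] at hp ⊢
    have ha : p.coeff 0 ≠ 0 := fun h => hp (by rw [h, map_zero])
    refine ⟨SignType.sign (p.coeff 0), |p.coeff 0|, 0, ?_, abs_pos.mpr ha, fun t _ => ?_⟩
    · rcases ha.lt_or_gt with hneg | hpos <;> simp [*]
    · rw [eval_C, ← sign_mul_abs (p.coeff 0)]
      rcases ha.lt_or_gt with hneg | hpos <;> simp [*]
  · rcases le_total 0 p.leadingCoeff with hlc | hlc
    · obtain ⟨T, hT⟩ := ((tendsto_atTop_of_leadingCoeff_nonneg p hdeg hlc).eventually_ge_atTop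
        1).exists_forall_of_atTop
      exact ⟨1, 1, T, abs_one, one_pos, fun t ht => by simpa using hT t ht⟩
    · obtain ⟨T, hT⟩ := ((tendsto_atBot_of_leadingCoeff_nonpos p hdeg hlc).eventually_le_atBot
        (-1)).exists_forall_of_atTop
      exact ⟨-1, 1, T, by simp, one_pos, fun t ht => by linarith [hT t ht]⟩

lemma ContDiffBump.const_mul_two_rIn_le_integral_mul {x₀ : ℝ} (φ : ContDiffBump x₀) {f : ℝ → ℝ}
    (hf : Continuous f) {c T : ℝ} (hc : 0 ≤ c) (hfT : ∀ t ≥ T, c ≤ f t) (hφ : T ≤ x₀ - φ.rOut) :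
    c * (2 * φ.rIn) ≤ ∫ t, f t * φ t := by
  have hint : Integrable fun t => f t * φ t :=
    (hf.mul φ.continuous).integrable_of_hasCompactSupport φ.hasCompactSupport.mul_left
  have hnonneg : ∀ t, 0 ≤ f t * φ t := by
    intro t
    by_cases ht : t ∈ ball x₀ φ.rOut
    · have : T ≤ t := by
        rw [Real.ball_eq_Ioo] at ht
        linarith [ht.1]
      exact mul_nonneg (hc.trans (hfT t this)) φ.nonneg
    · rw [← φ.support_eq, Function.notMem_support] at ht
      simp [ht]
  calc c * (2 * φ.rIn) = c * volume.real (closedBall x₀ φ.rIn) := by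
        rw [Real.volume_real_closedBall φ.rIn_pos.le]
    _ ≤ ∫ t in closedBall x₀ φ.rIn, f t * φ t := by
        refine setIntegral_ge_of_const_le_real measurableSet_closedBall measure_closedBall_lt_top.ne
          (fun t ht => ?_) hint.integrableOn
        rw [φ.one_of_mem_closedBall ht, mul_one]
        rw [mem_closedBall, Real.dist_eq, abs_le] at ht
        exact hfT t (by linarith [ht.1, φ.rIn_lt_rOut])
    _ ≤ ∫ t, f t * φ t := setIntegral_le_integral hint (Eventually.of_forall hnonneg)

lemma Polynomial.exists_abs_integral_mul_gt {p : Polynomial ℝ} (hp : p ≠ 0) (M : ℝ) :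
    ∃ φ : ℝ → ℝ, Continuous φ ∧ HasCompactSupport φ ∧ (∀ t, |φ t| ≤ 1) ∧
      M < |∫ t, p.eval t * φ t| := by
  obtain ⟨ε, c, T, hε, hc, hpT⟩ := exists_sign_mul_ge hp
  set R := |M| / (2 * c) + 1 with hR
  have hR0 : 0 < R := by positivity
  let φ : ContDiffBump (T + R + 1) := ⟨R, R + 1, hR0, by linarith⟩
  refine ⟨fun t => ε * φ t, continuous_const.mul φ.continuous, φ.hasCompactSupport.mul_left,
    fun t => ?_, ?_⟩
  · rw [abs_mul, hε, one_mul, abs_of_nonneg φ.nonneg]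
    exact φ.le_one
  have hbump := φ.const_mul_two_rIn_le_integral_mul (f := fun t => ε * p.eval t) (by fun_prop)
    hc.le hpT (by simp [φ])
  have hswap : ∫ t, p.eval t * (ε * φ t) = ∫ t, ε * p.eval t * φ t :=
    integral_congr_ae (Eventually.of_forall fun t => by ring)
  have hcR : c * (2 * R) = |M| + 2 * c := by
    rw [hR]
    field_simp
  calc M ≤ |M| := le_abs_self M
    _ < c * (2 * R) := by linarith
    _ ≤ ∫ t, p.eval t * (ε * φ t) := hswap ▸ hbump
    _ ≤ |∫ t, p.eval t * (ε * φ t)| := le_abs_self _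

lemma HasCompactSupport.comp_snd {α β M : Type*} [TopologicalSpace α] [CompactSpace α]
    [TopologicalSpace β] [Zero M] {f : β → M} (hf : HasCompactSupport f) :
    HasCompactSupport fun x : α × β => f x.2 :=
  (isCompact_univ.prod hf).of_isClosed_subset (isClosed_tsupport _) <|
    closure_minimal (fun _ hx => ⟨mem_univ _, subset_tsupport f hx⟩)
      (isClosed_univ.prod (isClosed_tsupport f))

/-- if two bounded real measures `μ, μ'` on `Ξ = S^{d-1} × ℝ` differ, as
distributions, by a polynomial in the variable `t` (i.e. they pair with all test functions up
to the pairing of the polynomial density `p(t) dt dn`), then `μ = μ'` as measures: no nonzero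
polynomial is a bounded measure. -/
theorem stmt_13 (d : ℕ) (μ μ' : SignedMeasure (Xi d))
    (σ : Measure (Sph d)) [IsFiniteMeasure σ] (p : Polynomial ℝ)
    (h : ∀ ψ : Xi d → ℝ, Continuous ψ → HasCompactSupport ψ →
      sInt μ ψ = sInt μ' ψ + ∫ n : Sph d, (∫ t : ℝ, Polynomial.eval t p * ψ (n, t)) ∂σ) :
    μ = μ' := by
  have hpσ : p = 0 ∨ σ = 0 := by
    by_contra! hne
    obtain ⟨hp, hσ⟩ := hne
    have : NeZero σ := ⟨hσ⟩
    set B := μ.totalVariation.real univ + μ'.totalVariation.real univ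
    obtain ⟨φ, hφc, hφs, hφ1, hφB⟩ := Polynomial.exists_abs_integral_mul_gt hp (B / σ.real univ)
    have hs : 0 < σ.real univ := measureReal_univ_pos
    have hpair : (sInt μ fun x => φ x.2) - sInt μ' (fun x => φ x.2) =
        σ.real univ * ∫ t, p.eval t * φ t := by
      rw [h (fun x => φ x.2) (hφc.comp continuous_snd) hφs.comp_snd, add_sub_cancel_left,
        ← smul_eq_mul, ← integral_const]
    have hbound : σ.real univ * |∫ t, p.eval t * φ t| ≤ B := by
      rw [← abs_of_pos hs, ← abs_mul, ← hpair]
      have hμ := abs_sInt_le μ fun x => hφ1 x.2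
      have hμ' := abs_sInt_le μ' fun x => hφ1 x.2
      linarith [abs_sub (sInt μ fun x => φ x.2) (sInt μ' fun x => φ x.2)]
    rw [div_lt_iff₀ hs] at hφB
    linarith
  refine eq_of_forall_sInt_eq fun ψ hψc hψs => ?_
  rcases hpσ with rfl | rfl <;> simpa using h ψ hψc hψs
end

section
/- Fix $m \ge 2$ and $d \ge 1$. The linear span of the functions $x \mapsto (n \cdot x - t)^{m-1}$, as $(n,t)$ ranges over $S^{d-1} \times \mathbb{R}$, equals the space of all polynomials on $\mathbb{R}^d$ of degree at most $m-1$. -/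
noncomputable def evalL (d : ℕ) : MvPolynomial (Fin d) ℝ →ₗ[ℝ] (E d → ℝ) where
  toFun p := fun x => MvPolynomial.eval (fun i => x i) p
  map_add' p q := by funext x; simp
  map_smul' s p := by funext x; simp [MvPolynomial.smul_eval]

noncomputable def ridgeSpan (d k : ℕ) : Submodule ℝ (E d → ℝ) :=
  Submodule.span ℝ {f : E d → ℝ | ∃ n : E d, ‖n‖ = 1 ∧ ∃ t : ℝ,
    f = fun x => ((∑ i, n i * x i) - t) ^ k}

/-- If a polynomial (in `t`) family of vectors lies in a submodule for every real `t`,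
then each coefficient lies in the submodule. -/
lemma vand_coeff_mem {M : Type*} [AddCommGroup M] [Module ℝ M] (W : Submodule ℝ M)
    (k : ℕ) (w : Fin (k+1) → M)
    (h : ∀ t : ℝ, (∑ j : Fin (k+1), t ^ (j : ℕ) • w j) ∈ W) : ∀ j, w j ∈ W := by
  intro j
  set A : Matrix (Fin (k+1)) (Fin (k+1)) ℝ := Matrix.vandermonde (fun i => (i : ℝ)) with hA
  have hdet : A.det ≠ 0 := by
    refine Matrix.det_vandermonde_ne_zero_iff.mpr ?_
    intro a b hab
    exact Fin.ext (Nat.cast_injective hab)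
  have hinv : A⁻¹ * A = 1 := Matrix.nonsing_inv_mul A (isUnit_iff_ne_zero.mpr hdet)
  have hw : (∑ i : Fin (k+1), A⁻¹ j i • (∑ l : Fin (k+1), ((i : ℝ)) ^ (l : ℕ) • w l))
      = w j := by
    have h1 : ∀ (i l : Fin (k+1)), ((i : ℝ)) ^ (l : ℕ) = A i l := fun i l => rfl
    calc ∑ i : Fin (k+1), A⁻¹ j i • (∑ l : Fin (k+1), ((i : ℝ)) ^ (l : ℕ) • w l)
        = ∑ i : Fin (k+1), ∑ l : Fin (k+1), (A⁻¹ j i * A i l) • w l := by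
          refine Finset.sum_congr rfl fun i _ => ?_
          rw [Finset.smul_sum]
          refine Finset.sum_congr rfl fun l _ => ?_
          rw [h1, smul_smul]
      _ = ∑ l : Fin (k+1), (∑ i : Fin (k+1), A⁻¹ j i * A i l) • w l := by
          rw [Finset.sum_comm]
          refine Finset.sum_congr rfl fun l _ => ?_
          rw [Finset.sum_smul]
      _ = ∑ l : Fin (k+1), (A⁻¹ * A) j l • w l := by
          refine Finset.sum_congr rfl fun l _ => ?_
          rw [Matrix.mul_apply]
      _ = w j := by rw [hinv]; simp [Matrix.one_apply]
  rw [← hw]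
  exact Submodule.sum_mem _ fun i _ => Submodule.smul_mem _ _ (h i)

lemma ridge_unit_pow_mem (d k : ℕ) {n : E d} (hn : ‖n‖ = 1) {j : ℕ} (hj : j ≤ k) :
    (fun x : E d => (∑ i, n i * x i) ^ j) ∈ ridgeSpan d k := by
  set w : Fin (k+1) → (E d → ℝ) :=
    fun l x => ((-1:ℝ) ^ (l:ℕ) * (k.choose l)) * (∑ i, n i * x i) ^ (k - (l:ℕ)) with hwdef
  have hgen : ∀ t : ℝ, (∑ l : Fin (k+1), t ^ (l:ℕ) • w l) ∈ ridgeSpan d k := by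
    intro t
    have heq : (∑ l : Fin (k+1), t ^ (l:ℕ) • w l)
        = fun x => ((∑ i, n i * x i) - t) ^ k := by
      funext x
      have h2 : ((∑ i, n i * x i) - t) ^ k = (-t + (∑ i, n i * x i)) ^ k := by ring_nf
      rw [h2, add_pow,
        ← Fin.sum_univ_eq_sum_range
          (fun m => (-t) ^ m * (∑ i, n i * x i) ^ (k - m) * (k.choose m)) (k+1)]
      simp only [Finset.sum_apply, Pi.smul_apply, smul_eq_mul, hwdef]
      refine Finset.sum_congr rfl fun l _ => ?_
      rw [neg_pow]
      ring
    rw [heq]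
    exact Submodule.subset_span ⟨n, hn, t, rfl⟩
  have hW := vand_coeff_mem _ k w hgen
  have h1 := hW ⟨k - j, by omega⟩
  have hc : ((-1:ℝ) ^ (k-j) * (k.choose (k-j))) ≠ 0 := by
    refine mul_ne_zero (pow_ne_zero _ (by norm_num)) ?_
    exact_mod_cast (Nat.choose_pos (Nat.sub_le k j)).ne'
  have htarget : (fun x : E d => (∑ i, n i * x i) ^ j)
      = ((-1:ℝ) ^ (k-j) * (k.choose (k-j)))⁻¹ • w ⟨k - j, by omega⟩ := by
    funext x
    simp only [Pi.smul_apply, smul_eq_mul, hwdef, Nat.sub_sub_self hj]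
    rw [inv_mul_cancel_left₀ hc]
  rw [htarget]
  exact Submodule.smul_mem _ _ h1

lemma ridge_pow_mem (d k : ℕ) (hd : 0 < d) (c : E d) {r : ℕ} (hr : r ≤ k) :
    (fun x : E d => (∑ i, c i * x i) ^ r) ∈ ridgeSpan d k := by
  by_cases hc : c = 0
  · subst hc
    rcases Nat.eq_zero_or_pos r with h0 | hpos
    · subst h0
      have := ridge_unit_pow_mem d k (n := EuclideanSpace.single ⟨0, hd⟩ (1:ℝ))
        (by simp) (Nat.zero_le k)
      simpa using this
    · have hz : (fun x : E d => (∑ i, (0 : E d) i * x i) ^ r) = 0 := by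
        funext x
        simp [zero_pow hpos.ne']
      rw [hz]
      exact Submodule.zero_mem _
  · have hnorm : ‖c‖ ≠ 0 := by simpa using hc
    set n : E d := ‖c‖⁻¹ • c with hn
    have hn1 : ‖n‖ = 1 := by
      rw [hn, norm_smul, norm_inv, norm_norm, inv_mul_cancel₀ hnorm]
    have hmem := ridge_unit_pow_mem d k hn1 hr
    have heq : (fun x : E d => (∑ i, c i * x i) ^ r)
        = (‖c‖ ^ r) • (fun x : E d => (∑ i, n i * x i) ^ r) := by
      funext x
      simp only [Pi.smul_apply, smul_eq_mul, hn, PiLp.smul_apply]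
      rw [← mul_pow]
      congr 1
      rw [Finset.mul_sum]
      refine (Finset.sum_congr rfl fun i _ => ?_).symm
      field_simp
    rw [heq]
    exact Submodule.smul_mem _ _ hmem

lemma ridge_monomial_mul_pow_mem (d k : ℕ) (hd : 0 < d) :
    ∀ (N : ℕ) (α : Fin d →₀ ℕ) (r : ℕ) (c : E d), (α.sum fun _ e => e) = N → N + r ≤ k →
    (fun x : E d => (∏ i, x i ^ α i) * (∑ i, c i * x i) ^ r) ∈ ridgeSpan d k := by
  intro N
  induction N with
  | zero =>
    intro α r c hα hle
    have hz : ∀ i, α i = 0 := by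
      intro i
      by_cases hi : i ∈ α.support
      · rw [Finsupp.sum, Finset.sum_eq_zero_iff] at hα
        exact hα i hi
      · exact Finsupp.notMem_support_iff.mp hi
    have := ridge_pow_mem d k hd c (show r ≤ k by omega)
    simpa [hz] using this
  | succ N ih =>
    intro α r c hα hle
    have hne : α ≠ 0 := by
      intro h
      rw [h] at hα
      simp at hα
    obtain ⟨i, hi⟩ := Finsupp.support_nonempty_iff.mpr hne
    have hαi : α i ≠ 0 := Finsupp.mem_support_iff.mp hi
    set β := α - Finsupp.single i 1 with hβ
    have hab : α = β + Finsupp.single i 1 := by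
      ext j
      rw [hβ]
      simp only [Finsupp.add_apply, Finsupp.tsub_apply, Finsupp.single_apply]
      rcases eq_or_ne i j with h | h
      · subst h
        split_ifs with hii
        · omega
        · exact absurd rfl hii
      · simp [h]
    have hβsum : (β.sum fun _ e => e) = N := by
      have h' := hα
      rw [hab, Finsupp.sum_add_index' (fun _ => rfl) (fun _ _ _ => rfl),
        Finsupp.sum_single_index rfl] at h'
      omega
    have hprod : ∀ x : E d, (∏ i', x i' ^ α i') = (∏ i', x i' ^ β i') * x i := by
      intro x
      rw [hab]
      have hsplit : ∀ i' : Fin d, x i' ^ (((β + Finsupp.single i 1) : Fin d →₀ ℕ) i')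
          = x i' ^ β i' * x i' ^ ((Finsupp.single i 1 : Fin d →₀ ℕ) i') := by
        intro i'
        rw [Finsupp.add_apply, pow_add]
      rw [Finset.prod_congr rfl (fun i' _ => hsplit i'), Finset.prod_mul_distrib]
      congr 1
      rw [Finset.prod_eq_single i
        (fun j _ hj => by simp [Finsupp.single_apply, (Ne.symm hj)]) (by simp)]
      simp [Finsupp.single_apply]
    set w : Fin (r+2) → (E d → ℝ) := fun l x =>
      (x i) ^ (l:ℕ) * (∑ i', c i' * x i') ^ (r + 1 - (l:ℕ)) * ((r+1).choose l)
        * (∏ i', x i' ^ β i') with hwdef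
    have hv : ∀ t : ℝ, (∑ l : Fin (r+2), t ^ (l:ℕ) • w l) ∈ ridgeSpan d k := by
      intro t
      have heq : (∑ l : Fin (r+2), t ^ (l:ℕ) • w l)
          = fun x => (∏ i', x i' ^ β i')
              * (∑ i', ((c + t • EuclideanSpace.single i 1 : E d) i') * x i') ^ (r+1) := by
        funext x
        have hsum : (∑ i' : Fin d, ((c + t • EuclideanSpace.single i 1 : E d) i') * x i')
            = (∑ i', c i' * x i') + t * x i := by
          have h1 : ∀ i' : Fin d, ((c + t • EuclideanSpace.single i 1 : E d) i') * x i'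
              = c i' * x i' + (if i' = i then t * x i' else 0) := by
            intro i'
            simp only [PiLp.add_apply, PiLp.smul_apply, EuclideanSpace.single_apply,
              smul_eq_mul]
            split_ifs <;> ring
          rw [Finset.sum_congr rfl fun i' _ => h1 i', Finset.sum_add_distrib]
          simp
        rw [hsum, show (∑ i', c i' * x i') + t * x i = t * x i + (∑ i', c i' * x i') from by
          ring, add_pow,
          ← Fin.sum_univ_eq_sum_range
            (fun l => (t * x i) ^ l * (∑ i', c i' * x i') ^ (r + 1 - l)
              * ((r+1).choose l)) (r+1+1),
          Finset.mul_sum]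
        simp only [Finset.sum_apply, Pi.smul_apply, smul_eq_mul, hwdef]
        refine Finset.sum_congr rfl fun l _ => ?_
        rw [mul_pow]
        ring
      rw [heq]
      exact ih β (r+1) (c + t • EuclideanSpace.single i 1) hβsum (by omega)
    have hw1 := vand_coeff_mem _ (r+1) w hv ⟨1, by omega⟩
    have hr1 : ((r:ℝ) + 1) ≠ 0 := by positivity
    have htarget : (fun x : E d => (∏ i', x i' ^ α i') * (∑ i', c i' * x i') ^ r)
        = ((r:ℝ) + 1)⁻¹ • w ⟨1, by omega⟩ := by
      funext x
      simp only [Pi.smul_apply, smul_eq_mul, hwdef, hprod x]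
      simp only [pow_one, Nat.add_sub_cancel, Nat.choose_one_right]
      push_cast
      field_simp
    rw [htarget]
    exact Submodule.smul_mem _ _ hw1

lemma ridge_monomial_mem (d k : ℕ) (hd : 0 < d) (α : Fin d →₀ ℕ)
    (hα : (α.sum fun _ e => e) ≤ k) :
    (fun x : E d => ∏ i, x i ^ α i) ∈ ridgeSpan d k := by
  have := ridge_monomial_mul_pow_mem d k hd (α.sum fun _ e => e) α 0 0 rfl (by omega)
  simpa using this

lemma ridge_main_span (d k : ℕ) (hd : 0 < d) (hk : 1 ≤ k) :
    ((ridgeSpan d k : Submodule ℝ (E d → ℝ)) : Set (E d → ℝ))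
      = {f : E d → ℝ | ∃ p : MvPolynomial (Fin d) ℝ, p.totalDegree ≤ k ∧
          ∀ x : E d, f x = MvPolynomial.eval (fun i => x i) p} := by
  apply Set.Subset.antisymm
  · set V : Submodule ℝ (E d → ℝ) :=
      (MvPolynomial.restrictTotalDegree (Fin d) ℝ k).map (evalL d) with hV
    have hle : ridgeSpan d k ≤ V := by
      rw [ridgeSpan, Submodule.span_le]
      rintro f ⟨n, hn, t, rfl⟩
      rw [SetLike.mem_coe]
      refine Submodule.mem_map.mpr
        ⟨((∑ i, MvPolynomial.C (n i) * MvPolynomial.X i) - MvPolynomial.C t) ^ k, ?_, ?_⟩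
      · rw [MvPolynomial.mem_restrictTotalDegree]
        refine le_trans (MvPolynomial.totalDegree_pow _ _) ?_
        have h1 : ((∑ i, MvPolynomial.C (n i) * MvPolynomial.X i : MvPolynomial (Fin d) ℝ)
            - MvPolynomial.C t).totalDegree ≤ 1 := by
          refine le_trans (MvPolynomial.totalDegree_sub _ _) (sup_le ?_ (by simp))
          refine le_trans (MvPolynomial.totalDegree_finset_sum _ _)
            (Finset.sup_le fun i _ => ?_)
          refine le_trans (MvPolynomial.totalDegree_mul _ _) ?_
          simp [MvPolynomial.totalDegree_X]
        calc k * (((∑ i, MvPolynomial.C (n i) * MvPolynomial.X i : MvPolynomial (Fin d) ℝ)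
              - MvPolynomial.C t).totalDegree) ≤ k * 1 := Nat.mul_le_mul_left k h1
          _ = k := by omega
      · funext x
        simp [evalL]
    intro f hf
    obtain ⟨p, hp, rfl⟩ := hle hf
    exact ⟨p, (MvPolynomial.mem_restrictTotalDegree _ _ _).mp hp, fun x => rfl⟩
  · rintro f ⟨p, hp, hf⟩
    have hfe : f = fun x => MvPolynomial.eval (fun i => x i) p := funext hf
    rw [hfe]
    have hrep : (fun x : E d => MvPolynomial.eval (fun i => x i) p)
        = ∑ α ∈ p.support, MvPolynomial.coeff α p • (fun x : E d => ∏ i, x i ^ α i) := by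
      funext x
      rw [MvPolynomial.eval_eq']
      simp [Finset.sum_apply]
    rw [hrep, SetLike.mem_coe]
    exact Submodule.sum_mem _ fun α hα => Submodule.smul_mem _ _
      (ridge_monomial_mem d k hd α (le_trans (MvPolynomial.le_totalDegree hα) hp))

/-- for `m ≥ 2` and `d ≥ 1`, the linear span of the ridge monomials
`x ↦ (n⋅x - t)^{m-1}`, `(n,t) ∈ S^{d-1} × ℝ`, is exactly the space of polynomial functions on
`ℝ^d` of (total) degree at most `m-1`. -/
theorem stmt_16 (d m : ℕ) (hd : 0 < d) (hm : 2 ≤ m) :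
    (Submodule.span ℝ {f : E d → ℝ | ∃ n : E d, ‖n‖ = 1 ∧ ∃ t : ℝ,
        f = fun x => ((∑ i, n i * x i) - t) ^ (m - 1)} : Set (E d → ℝ))
      = {f : E d → ℝ | ∃ p : MvPolynomial (Fin d) ℝ, p.totalDegree ≤ m - 1 ∧
          ∀ x : E d, f x = MvPolynomial.eval (fun i => x i) p} := by
  exact ridge_main_span d (m - 1) hd (by omega)
end
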